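/- arXiv:2202.08113 — 4 statements merged into one kernel-verified Lean document; each statement's English description precedes it below -/
import Mathlib

section
/- Let (T, U, Q) be a duality triple. Then a morphism f: X → Y in T is phantom if and only if Q(f) = 0. In particular, a triangle A → B → C → ΣA in T is pure if and only if the induced triangle Q(C) → Q(B) → Q(A) → ΣQ(C) in U is split. -/
open CategoryTheory CategoryTheory.Limits CategoryTheory.Pretriangulated Opposite

universe v u

namespace Paper

variable (T : Type u) [Category.{v} T]

/-- An object `C` of a category is *compact* if `Hom(C,-)` preserves set-indexed coproducts. -/
def IsCompactObj (C : T) : Prop :=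
  ∀ α : Type v, Nonempty (PreservesColimitsOfShape (Discrete α) (coyoneda.obj (op C)))

section Triangulated

variable [HasZeroObject T] [Preadditive T] [HasShift T ℤ]
  [∀ n : ℤ, (shiftFunctor T n).Additive] [Pretriangulated T]

/-- A triangulated category is *compactly generated* if it has set-indexed coproducts and
there is a set `G` of compact objects such that `X ≃ 0` iff `Hom(Σⁿ G, X) = 0` for all
`G ∈ G` and `n ∈ ℤ`. -/
structure IsCompactlyGenerated : Prop where
  hasCoproducts : ∀ α : Type v, HasColimitsOfShape (Discrete α) T
  exists_generators : ∃ G : Set T, (∀ C ∈ G, IsCompactObj T C) ∧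
    ∀ X : T, (∀ C ∈ G, ∀ n : ℤ, ∀ f : C⟦n⟧ ⟶ X, f = 0) → IsZero X

variable {T}

/-- A morphism is *phantom* if its composite with any map out of a compact object vanishes. -/
def IsPhantom {X Y : T} (f : X ⟶ Y) : Prop :=
  ∀ ⦃C : T⦄, IsCompactObj T C → ∀ g : C ⟶ X, g ≫ f = 0

/-- A triangle `X ⟶ Y ⟶ Z ⟶ ΣX` is *pure* if it is distinguished and for every compact `C`
the sequence `0 ⟶ Hom(C,X) ⟶ Hom(C,Y) ⟶ Hom(C,Z) ⟶ 0` is exact, i.e. the sequence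
`0 ⟶ yX ⟶ yY ⟶ yZ ⟶ 0` is exact in `Mod-T^c`. -/
def IsPureTriangle (Tr : Triangle T) : Prop :=
  (Tr ∈ distTriang T) ∧
  ∀ ⦃C : T⦄, IsCompactObj T C →
    (Function.Injective fun g : C ⟶ Tr.obj₁ => g ≫ Tr.mor₁) ∧
    (∀ g : C ⟶ Tr.obj₂, g ≫ Tr.mor₂ = 0 → ∃ h : C ⟶ Tr.obj₁, h ≫ Tr.mor₁ = g) ∧
    (Function.Surjective fun g : C ⟶ Tr.obj₂ => g ≫ Tr.mor₂)

/-- A morphism is a *pure monomorphism* if it appears as the first map of a pure triangle. -/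
def IsPureMono {X Y : T} (f : X ⟶ Y) : Prop :=
  ∃ (Z : T) (g : Y ⟶ Z) (h : Z ⟶ X⟦(1:ℤ)⟧), IsPureTriangle (Triangle.mk f g h)

/-- A morphism is a *pure epimorphism* if it appears as the second map of a pure triangle. -/
def IsPureEpi {Y Z : T} (g : Y ⟶ Z) : Prop :=
  ∃ (X : T) (f : X ⟶ Y) (h : Z ⟶ X⟦(1:ℤ)⟧), IsPureTriangle (Triangle.mk f g h)

/-- An object `X` is *pure injective* if every phantom map into `X` is zero
(equivalently, `yX` is injective in `Mod-T^c`). -/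
def IsPureInjective (X : T) : Prop :=
  ∀ ⦃Y : T⦄ (f : Y ⟶ X), IsPhantom f → f = 0

end Triangulated

section DualityTriple

variable (U : Type u) [Category.{v} U]
variable [HasZeroObject T] [Preadditive T] [HasShift T ℤ]
  [∀ n : ℤ, (shiftFunctor T n).Additive] [Pretriangulated T]
variable [HasZeroObject U] [Preadditive U] [HasShift U ℤ]
  [∀ n : ℤ, (shiftFunctor U n).Additive] [Pretriangulated U]

/-- A *duality triple* `(T, U, Q)` consists of compactly generated triangulated categories
`T` and `U` together with exact functors `Q : Tᵒᵖ ⥤ U` and `Q : Uᵒᵖ ⥤ T` such that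
(1) `Q X` is pure injective for all `X`;
(2) there is a natural pure monomorphism `i_X : X ⟶ Q²X` for all `X`;
(3) `Q(i_X) ∘ i_{Q X} = id`;
(4) `Q` sends set-indexed coproducts to products. -/
structure DualityTriple where
  /-- The contravariant functor `Q : Tᵒᵖ ⥤ U`. -/
  QT : Tᵒᵖ ⥤ U
  /-- The contravariant functor `Q : Uᵒᵖ ⥤ T`. -/
  QU : Uᵒᵖ ⥤ T
  cgT : IsCompactlyGenerated T
  cgU : IsCompactlyGenerated U
  QT_additive : QT.Additive
  QU_additive : QU.Additive
  /-- `Q : Tᵒᵖ ⥤ U` is exact: it sends distinguished triangles to distinguished triangles. -/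
  QT_exact : ∀ Tr ∈ distTriang T, ∃ h : QT.obj (op Tr.obj₁) ⟶ (QT.obj (op Tr.obj₃))⟦(1:ℤ)⟧,
    Triangle.mk (QT.map Tr.mor₂.op) (QT.map Tr.mor₁.op) h ∈ distTriang U
  QU_exact : ∀ Tr ∈ distTriang U, ∃ h : QU.obj (op Tr.obj₁) ⟶ (QU.obj (op Tr.obj₃))⟦(1:ℤ)⟧,
    Triangle.mk (QU.map Tr.mor₂.op) (QU.map Tr.mor₁.op) h ∈ distTriang T
  QT_pureInjective : ∀ X : T, IsPureInjective (QT.obj (op X))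
  QU_pureInjective : ∀ Y : U, IsPureInjective (QU.obj (op Y))
  /-- the natural transformation `i : X ⟶ Q²X` -/
  i : 𝟭 T ⟶ QT.rightOp ⋙ QU
  /-- the natural transformation `i : Y ⟶ Q²Y` -/
  j : 𝟭 U ⟶ QU.rightOp ⋙ QT
  i_pureMono : ∀ X : T, IsPureMono (i.app X)
  j_pureMono : ∀ Y : U, IsPureMono (j.app Y)
  Qi : ∀ X : T, j.app (QT.obj (op X)) ≫ QT.map (i.app X).op = 𝟙 (QT.obj (op X))
  Qj : ∀ Y : U, i.app (QU.obj (op Y)) ≫ QU.map (j.app Y).op = 𝟙 (QU.obj (op Y))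
  /-- `Q(⊕ᵢ Xᵢ) ≅ ∏ᵢ Q(Xᵢ)`: `Q` sends coproducts to products. -/
  QT_coproductsToProducts :
    ∀ ⦃α : Type v⦄ (X : α → T) (c : Cofan X), Nonempty (IsColimit c) →
      Nonempty (IsLimit (Fan.mk (QT.obj (op c.pt)) fun a => QT.map (c.inj a).op))
  QU_coproductsToProducts :
    ∀ ⦃α : Type v⦄ (X : α → U) (c : Cofan X), Nonempty (IsColimit c) →
      Nonempty (IsLimit (Fan.mk (QU.obj (op c.pt)) fun a => QU.map (c.inj a).op))

end DualityTriple

section Classes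

variable {C : Type u} [Category.{v} C]

/-- A class of objects is closed under retracts. -/
def ClosedUnderRetracts (A : Set C) : Prop :=
  ∀ ⦃X : C⦄, X ∈ A → ∀ ⦃Y : C⦄, (∃ (s : Y ⟶ X) (r : X ⟶ Y), s ≫ r = 𝟙 Y) → Y ∈ A

/-- A class of objects is closed under finite coproducts. -/
def ClosedUnderFiniteCoproducts (A : Set C) : Prop :=
  ∀ ⦃X Y : C⦄, X ∈ A → Y ∈ A → ∀ c : BinaryCofan X Y, Nonempty (IsColimit c) → c.pt ∈ A

/-- A class of objects is closed under set-indexed products. -/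
def ClosedUnderProducts (A : Set C) : Prop :=
  ∀ ⦃α : Type v⦄ (X : α → C), (∀ a, X a ∈ A) → ∀ c : Fan X, Nonempty (IsLimit c) → c.pt ∈ A

/-- A class of objects is closed under set-indexed coproducts. -/
def ClosedUnderCoproducts (A : Set C) : Prop :=
  ∀ ⦃α : Type v⦄ (X : α → C), (∀ a, X a ∈ A) → ∀ c : Cofan X, Nonempty (IsColimit c) → c.pt ∈ A

/-- A class of objects is closed under isomorphisms. -/
def ClosedUnderIso (A : Set C) : Prop :=
  ∀ ⦃X : C⦄, X ∈ A → ∀ ⦃Y : C⦄, Nonempty (X ≅ Y) → Y ∈ A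

end Classes

section TriangulatedClasses

variable {T} [HasZeroObject T] [Preadditive T] [HasShift T ℤ]
  [∀ n : ℤ, (shiftFunctor T n).Additive] [Pretriangulated T]

/-- A class of objects is closed under extensions (triangles). -/
def ClosedUnderExtensions (A : Set T) : Prop :=
  ∀ Tr ∈ distTriang T, Tr.obj₁ ∈ A → Tr.obj₃ ∈ A → Tr.obj₂ ∈ A

/-- A class of objects is *triangulated* if it is closed under isomorphisms, shifts
(in both directions) and triangles. -/
def IsTriangulatedClass (A : Set T) : Prop :=
  ClosedUnderIso A ∧ (∀ X ∈ A, X⟦(1:ℤ)⟧ ∈ A) ∧ (∀ X ∈ A, X⟦(-1:ℤ)⟧ ∈ A) ∧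
    ClosedUnderExtensions A

/-- A class of objects is closed under pure subobjects. -/
def ClosedUnderPureSubobjects (A : Set T) : Prop :=
  ∀ ⦃X Y : T⦄ (f : X ⟶ Y), IsPureMono f → Y ∈ A → X ∈ A

/-- A class of objects is closed under pure quotients. -/
def ClosedUnderPureQuotients (A : Set T) : Prop :=
  ∀ ⦃Y Z : T⦄ (g : Y ⟶ Z), IsPureEpi g → Y ∈ A → Z ∈ A

/-- A class of objects is closed under pure extensions. -/
def ClosedUnderPureExtensions (A : Set T) : Prop :=
  ∀ Tr : Triangle T, IsPureTriangle Tr → Tr.obj₁ ∈ A → Tr.obj₃ ∈ A → Tr.obj₂ ∈ A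

end TriangulatedClasses

section DualityPairs

variable {T} {U : Type u} [Category.{v} U]
variable [HasZeroObject T] [Preadditive T] [HasShift T ℤ]
  [∀ n : ℤ, (shiftFunctor T n).Additive] [Pretriangulated T]
variable [HasZeroObject U] [Preadditive U] [HasShift U ℤ]
  [∀ n : ℤ, (shiftFunctor U n).Additive] [Pretriangulated U]

/-- A pair of classes `(A, B)` is a *duality pair* with respect to a contravariant functor
`Q : Tᵒᵖ ⥤ U` if `X ∈ A ↔ Q X ∈ B` and `B` is closed under finite coproducts and retracts. -/
def IsDualityPairFor (Q : Tᵒᵖ ⥤ U) (A : Set T) (B : Set U) : Prop :=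
  (∀ X : T, X ∈ A ↔ Q.obj (op X) ∈ B) ∧
    ClosedUnderFiniteCoproducts B ∧ ClosedUnderRetracts B

/-- A *duality pair* on a duality triple `(T, U, Q)`. -/
def IsDualityPair (D : DualityTriple T U) (A : Set T) (B : Set U) : Prop :=
  IsDualityPairFor D.QT A B

/-- A duality pair is *symmetric* if `(B, A)` is also a duality pair. -/
def IsSymmetricDualityPair (D : DualityTriple T U) (A : Set T) (B : Set U) : Prop :=
  IsDualityPairFor D.QT A B ∧ IsDualityPairFor D.QU B A

end DualityPairs

end Paper

namespace Paper

section AuxLemmas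

variable {T : Type u} [Category.{v} T]

/-- Compactness transfers along isomorphisms. -/
lemma isCompactObj_of_iso {C D : T} (e : C ≅ D) (h : IsCompactObj T C) :
    IsCompactObj T D := by
  intro α
  obtain ⟨inst⟩ := h α
  exact ⟨preservesColimitsOfShape_of_natIso (coyoneda.mapIso e.symm.op)⟩

/-- Shifts of compact objects are compact. -/
lemma isCompactObj_shift [HasShift T ℤ] {C : T} (h : IsCompactObj T C) (n : ℤ) :
    IsCompactObj T (C⟦n⟧) := by
  intro α
  obtain ⟨inst⟩ := h α
  letI : PreservesColimitsOfShape (Discrete α)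
      (shiftFunctor T (-n) ⋙ coyoneda.obj (op C)) := inferInstance
  refine ⟨preservesColimitsOfShape_of_natIso
    (F := shiftFunctor T (-n) ⋙ coyoneda.obj (op C))
    (G := coyoneda.obj (op (C⟦n⟧))) ?_⟩
  exact NatIso.ofComponents
    (fun X => Equiv.toIso (((shiftEquiv T n).toAdjunction.homEquiv C X).symm))
    (fun f => by
      ext g
      exact Adjunction.homEquiv_naturality_right_symm _ _ _)

variable [HasZeroObject T] [Preadditive T] [HasShift T ℤ]
  [∀ n : ℤ, (shiftFunctor T n).Additive] [Pretriangulated T]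

/-- A distinguished triangle is pure iff its connecting morphism is phantom. -/
lemma isPureTriangle_iff_isPhantom_mor₃ (Tr : Triangle T) (hTr : Tr ∈ distTriang T) :
    IsPureTriangle Tr ↔ IsPhantom Tr.mor₃ := by
  constructor
  · rintro ⟨-, h⟩ C hC g
    obtain ⟨g', rfl⟩ := (h hC).2.2 g
    rw [Category.assoc, comp_distTriang_mor_zero₂₃ _ hTr, comp_zero]
  · intro hph
    refine ⟨hTr, fun C hC => ⟨?_, ?_, ?_⟩⟩
    · intro g₁ g₂ hg
      have hg' : g₁ ≫ Tr.mor₁ = g₂ ≫ Tr.mor₁ := hg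
      have hd : (g₁ - g₂) ≫ Tr.mor₁ = 0 := by
        rw [Preadditive.sub_comp, hg', sub_self]
      have hshift : (g₁ - g₂)⟦(1:ℤ)⟧' ≫ Tr.mor₁⟦(1:ℤ)⟧' = 0 := by
        rw [← Functor.map_comp, hd, Functor.map_zero]
      obtain ⟨g', hg'⟩ := Triangle.coyoneda_exact₁ _ hTr ((g₁ - g₂)⟦(1:ℤ)⟧') hshift
      have hz : (g₁ - g₂)⟦(1:ℤ)⟧' = 0 := by
        rw [hg', hph (isCompactObj_shift hC 1) g']
      rw [Functor.map_eq_zero_iff] at hz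
      exact sub_eq_zero.1 hz
    · intro g hg
      obtain ⟨g', hg'⟩ := Triangle.coyoneda_exact₂ _ hTr g hg
      exact ⟨g', hg'.symm⟩
    · intro g
      obtain ⟨g', hg'⟩ := Triangle.coyoneda_exact₃ _ hTr g (hph hC g)
      exact ⟨g', hg'.symm⟩

end AuxLemmas

/-- Let `(T, U, Q)` be a duality triple. Then a morphism `f : X ⟶ Y` in `T`
is phantom if and only if `Q f = 0`. In particular, a triangle `A ⟶ B ⟶ C ⟶ ΣA` in `T` is
pure if and only if the induced triangle `Q C ⟶ Q B ⟶ Q A ⟶ ΣQ C` in `U` is split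
(i.e. is distinguished with zero connecting morphism). -/
theorem phantom_iff_Q_eq_zero_and_pure_iff_split
    {T U : Type u} [Category.{v} T] [Category.{v} U]
    [HasZeroObject T] [Preadditive T] [HasShift T ℤ]
    [∀ n : ℤ, (shiftFunctor T n).Additive] [Pretriangulated T]
    [HasZeroObject U] [Preadditive U] [HasShift U ℤ]
    [∀ n : ℤ, (shiftFunctor U n).Additive] [Pretriangulated U]
    (D : DualityTriple T U) :
    (∀ ⦃X Y : T⦄ (f : X ⟶ Y), IsPhantom f ↔ D.QT.map f.op = 0) ∧
    (∀ Tr : Triangle T, Tr ∈ (distTriang T) →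
      (IsPureTriangle Tr ↔
        (Triangle.mk (D.QT.map Tr.mor₂.op) (D.QT.map Tr.mor₁.op) 0 ∈ distTriang U))) := by
  letI := D.QT_additive
  letI := D.QU_additive
  have part1 : ∀ ⦃X Y : T⦄ (f : X ⟶ Y), IsPhantom f ↔ D.QT.map f.op = 0 := by
    intro X Y f
    constructor
    · intro hf
      -- `f ≫ i_Y` is a phantom map into the pure injective object `Q²Y`, hence zero.
      have h1 : f ≫ D.i.app Y = 0 := by
        apply D.QU_pureInjective (D.QT.obj (op Y))
        intro C hC g
        rw [← Category.assoc, hf hC g, zero_comp]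
      calc D.QT.map f.op
          = (D.j.app (D.QT.obj (op Y)) ≫ D.QT.map (D.i.app Y).op) ≫ D.QT.map f.op := by
            rw [D.Qi]; exact (Category.id_comp _).symm
        _ = D.j.app (D.QT.obj (op Y)) ≫ D.QT.map ((f ≫ D.i.app Y).op) := by
            rw [Category.assoc, ← Functor.map_comp, ← op_comp]
        _ = 0 := by rw [h1, op_zero, Functor.map_zero, comp_zero]
    · intro hQ C hC g
      have hnat := D.i.naturality f
      simp only [Functor.id_map, Functor.comp_map, Functor.rightOp_map] at hnat
      rw [hQ, op_zero, Functor.map_zero, comp_zero] at hnat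
      -- so `f ≫ i_Y = 0`, and `i_Y` is a pure monomorphism
      obtain ⟨Z, p, q, hPT⟩ := D.i_pureMono Y
      have := (hPT.2 hC).1 (a₁ := g ≫ f) (a₂ := 0) (by
        show (g ≫ f) ≫ D.i.app Y = 0 ≫ D.i.app Y
        rw [Category.assoc, hnat, comp_zero, zero_comp])
      exact this
  refine ⟨part1, fun Tr hTr => ?_⟩
  rw [isPureTriangle_iff_isPhantom_mor₃ Tr hTr]
  constructor
  · intro hph
    -- `Q mor₂` is a split monomorphism
    obtain ⟨k, hk⟩ := D.QT_exact _ (rot_of_distTriang _ hTr)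
    have h0 : D.QT.map Tr.rotate.mor₂.op = 0 := (part1 Tr.rotate.mor₂).1 hph
    obtain ⟨r, hr⟩ : ∃ r : D.QT.obj (op Tr.obj₂) ⟶ D.QT.obj (op Tr.obj₃),
        𝟙 _ = D.QT.map Tr.mor₂.op ≫ r := Triangle.yoneda_exact₂ _ hk (𝟙 _) (by
      dsimp only [Triangle.mk]
      rw [h0, zero_comp]; rfl)
    -- `hr : 𝟙 _ = Q mor₂ ≫ r`
    obtain ⟨h', hh'⟩ := D.QT_exact _ hTr
    have c : h' ≫ (D.QT.map Tr.mor₂.op)⟦(1:ℤ)⟧' = 0 := comp_distTriang_mor_zero₃₁ _ hh'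
    have hr' : 𝟙 (D.QT.obj (op Tr.obj₃)) =
        D.QT.map Tr.mor₂.op ≫ (r : D.QT.obj (op Tr.obj₂) ⟶ D.QT.obj (op Tr.obj₃)) := hr
    have hz : h' = 0 := by
      calc h' = h' ≫ (D.QT.map Tr.mor₂.op ≫
                (r : D.QT.obj (op Tr.obj₂) ⟶ D.QT.obj (op Tr.obj₃)))⟦(1:ℤ)⟧' := by
              rw [← hr', CategoryTheory.Functor.map_id]; exact (Category.comp_id _).symm
        _ = (h' ≫ (D.QT.map Tr.mor₂.op)⟦(1:ℤ)⟧') ≫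
                (r : D.QT.obj (op Tr.obj₂) ⟶ D.QT.obj (op Tr.obj₃))⟦(1:ℤ)⟧' := by
              rw [Functor.map_comp, Category.assoc]
        _ = 0 := by rw [c, zero_comp]
    rw [hz] at hh'
    exact hh'
  · intro hdist
    -- from the split triangle, `Q mor₂` admits a retraction
    obtain ⟨r, hr⟩ : ∃ r : D.QT.obj (op Tr.obj₂) ⟶ D.QT.obj (op Tr.obj₃),
        𝟙 _ = D.QT.map Tr.mor₂.op ≫ r :=
      Triangle.yoneda_exact₂ _ (inv_rot_of_distTriang _ hdist) (𝟙 _) (by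
        dsimp only [Triangle.mk, Triangle.invRotate]; rw [Functor.map_zero]; simp; rfl)
    have hcomp : D.QT.map Tr.mor₃.op ≫ D.QT.map Tr.mor₂.op = 0 := by
      rw [← Functor.map_comp, ← op_comp, comp_distTriang_mor_zero₂₃ _ hTr, op_zero,
        Functor.map_zero]
    refine (part1 Tr.mor₃).2 ?_
    calc D.QT.map Tr.mor₃.op
        = D.QT.map Tr.mor₃.op ≫ (D.QT.map Tr.mor₂.op ≫ r) := by
          rw [← hr]; exact (Category.comp_id _).symm
      _ = (D.QT.map Tr.mor₃.op ≫ D.QT.map Tr.mor₂.op) ≫ r := by rw [Category.assoc]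
      _ = 0 := by rw [hcomp, zero_comp]

end Paper
end

section
/- Let (T, U, Q) be a duality triple and f: X → Y a morphism in T. Then f is phantom if and only if the composite i_Y ∘ f: X → Y → Q²(Y) is zero. -/
open CategoryTheory CategoryTheory.Limits CategoryTheory.Pretriangulated Opposite

universe v u

namespace Paper

variable (T : Type u) [Category.{v} T]

/-! `Q²Y` is pure injective, so it kills every phantom map. Conversely `i_Y` is a pure
monomorphism, so composing with it is injective on maps out of compact objects. -/

section Phantom

variable {T : Type u} [Category.{v} T] [Preadditive T]

theorem isPhantom_zero {X Y : T} : IsPhantom (0 : X ⟶ Y) :=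
  fun _ _ _ => comp_zero

theorem IsPhantom.comp {X Y Z : T} {f : X ⟶ Y} (hf : IsPhantom f) (g : Y ⟶ Z) :
    IsPhantom (f ≫ g) := by
  intro C hC h
  rw [← Category.assoc, hf hC h, zero_comp]

variable [HasZeroObject T] [HasShift T ℤ] [∀ n : ℤ, (shiftFunctor T n).Additive]
  [Pretriangulated T]

theorem IsPureMono.comp_injective {X Y C : T} {i : X ⟶ Y} (hi : IsPureMono i)
    (hC : IsCompactObj T C) : Function.Injective fun g : C ⟶ X => g ≫ i := by
  obtain ⟨_, _, _, hpure⟩ := hi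
  exact (hpure.2 hC).1

theorem IsPureMono.isPhantom_of_isPhantom_comp {X Y Z : T} {f : X ⟶ Y} {i : Y ⟶ Z}
    (hi : IsPureMono i) (hfi : IsPhantom (f ≫ i)) : IsPhantom f := by
  intro C hC g
  apply hi.comp_injective hC
  simp only [Category.assoc, hfi hC g, zero_comp]

end Phantom

/-- Let `(T, U, Q)` be a duality triple and `f : X ⟶ Y` a morphism in `T`.
Then `f` is phantom if and only if the composite `i_Y ∘ f : X ⟶ Y ⟶ Q²Y` is zero. -/
theorem phantom_iff_comp_i_eq_zero
    {T U : Type u} [Category.{v} T] [Category.{v} U]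
    [HasZeroObject T] [Preadditive T] [HasShift T ℤ]
    [∀ n : ℤ, (shiftFunctor T n).Additive] [Pretriangulated T]
    [HasZeroObject U] [Preadditive U] [HasShift U ℤ]
    [∀ n : ℤ, (shiftFunctor U n).Additive] [Pretriangulated U]
    (D : DualityTriple T U) {X Y : T} (f : X ⟶ Y) :
    IsPhantom f ↔ f ≫ D.i.app Y = 0 := by
  refine ⟨fun hf => D.QU_pureInjective _ _ (hf.comp _), fun h => ?_⟩
  refine (D.i_pureMono Y).isPhantom_of_isPhantom_comp ?_
  rw [h]
  exact isPhantom_zero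

end Paper
end

section
/- Let (A, B) be a duality pair on a duality triple (T, U, Q). Then: (1) if B is closed under arbitrary products, then A is closed under arbitrary coproducts; (2) if B is a triangulated subcategory, then so is A. Moreover, if (A,B) is a duality pair on the duality triple (T, T, 𝕀) for a big tensor-triangulated category T, then (3) if B is F-closed (F(X,B) ∈ B for all B ∈ B, X ∈ T), then A is a ⊗-ideal (X ⊗ A ∈ A for all A ∈ A, X ∈ T). -/
open CategoryTheory CategoryTheory.Limits CategoryTheory.Pretriangulated Opposite

universe v u

namespace Paper

open MonoidalCategory MonoidalClosed

section BigTT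

variable (T : Type u) [Category.{v} T]
  [HasZeroObject T] [Preadditive T] [HasShift T ℤ]
  [∀ n : ℤ, (shiftFunctor T n).Additive] [Pretriangulated T]
  [MonoidalCategory T] [SymmetricCategory T] [MonoidalPreadditive T] [MonoidalClosed T]

/-- An object of a closed symmetric monoidal category is *rigid* (dualizable) if it admits a
(left) dual, equivalently if the canonical map `DX ⊗ Y ⟶ F(X,Y)` is an isomorphism for
every `Y`. -/
def IsRigidObj (X : T) : Prop := Nonempty (HasLeftDual X)

/-- A *big tensor-triangulated category* is a compactly generated tensor-triangulated
category (a triangulated category with a compatible closed symmetric monoidal structure)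
in which the rigid and compact objects coincide. -/
structure IsBigTT : Prop where
  cg : IsCompactlyGenerated T
  rigid_iff_compact : ∀ X : T, IsRigidObj T X ↔ IsCompactObj T X
  shift_tensor : ∀ (X : T) (n : ℤ),
    Nonempty (tensorLeft X ⋙ shiftFunctor T n ≅ shiftFunctor T n ⋙ tensorLeft X)
  tensor_exact : ∀ (X : T), ∀ Tr ∈ distTriang T,
    ∃ h : X ⊗ Tr.obj₃ ⟶ (X ⊗ Tr.obj₁)⟦(1:ℤ)⟧,
      Triangle.mk (X ◁ Tr.mor₁) (X ◁ Tr.mor₂) h ∈ distTriang T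

variable {T}

/-- The abelian group `ℚ/ℤ`. -/
abbrev QmodZ : Type := AddCircle (1 : ℚ)

/-- `W` is *the Brown-Comenetz dual* `𝕀_C(X)` of `X` with respect to a compact object `C` if
it represents the cohomological functor `Hom_ℤ(Hom_T(C, X ⊗ -), ℚ/ℤ)`, i.e. there is an
isomorphism `Hom_T(Y, W) ≅ Hom_ℤ(Hom_T(C, X ⊗ Y), ℚ/ℤ)` of abelian groups, natural in `Y`. -/
def IsBrownComenetzDual (C X W : T) : Prop :=
  ∃ e : ∀ Y : T, (Y ⟶ W) ≃+ ((C ⟶ X ⊗ Y) →+ QmodZ),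
    ∀ ⦃Y Y' : T⦄ (g : Y' ⟶ Y) (f : Y ⟶ W) (c : C ⟶ X ⊗ Y'),
      e Y' (g ≫ f) c = e Y f (c ≫ (X ◁ g))

end BigTT

end Paper

namespace Paper

open MonoidalCategory MonoidalClosed

variable {T : Type u} [Category.{v} T]
  [HasZeroObject T] [Preadditive T] [HasShift T ℤ]
  [∀ n : ℤ, (shiftFunctor T n).Additive] [Pretriangulated T]
  [MonoidalCategory T] [SymmetricCategory T] [MonoidalPreadditive T] [MonoidalClosed T]

/-- A *duality pair* `(A, B)` on the duality triple `(T, T, 𝕀)` of a big tensor-triangulated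
category, where `𝕀X = F(X, I)` for `I` the Brown-Comenetz dual of the unit:
`X ∈ A ↔ F(X, I) ∈ B`, and `B` is closed under finite coproducts and retracts. -/
def IsBCDualityPair (I : T) (A B : Set T) : Prop :=
  (∀ X : T, X ∈ A ↔ (ihom X).obj I ∈ B) ∧
    ClosedUnderFiniteCoproducts B ∧ ClosedUnderRetracts B


noncomputable def tensorLeftCompIso (X a : T) : tensorLeft X ⋙ tensorLeft a ≅ tensorLeft (X ⊗ a) :=
  NatIso.ofComponents (fun Y => (α_ a X Y).symm ≪≫ whiskerRightIso (β_ a X) Y)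
    (by intros; dsimp; simp only [whiskerRightIso_hom]; rw [associator_inv_naturality_right_assoc, whisker_exchange]; simp)

noncomputable def ihomTensorIso (X a : T) : ihom (X ⊗ a) ≅ ihom a ⋙ ihom X :=
  Adjunction.rightAdjointUniq (ihom.adjunction (X ⊗ a))
    (((ihom.adjunction X).comp (ihom.adjunction a)).ofNatIsoLeft (tensorLeftCompIso X a))

/-- Let `(A, B)` be a duality pair on a duality triple `(T, U, Q)`. Then:
(1) if `B` is closed under arbitrary products, then `A` is closed under arbitrary coproducts;
(2) if `B` is a triangulated subcategory, then so is `A`.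
Moreover, if `(A, B)` is a duality pair on the duality triple `(T, T, 𝕀)` for a big
tensor-triangulated category `T`, then (3) if `B` is `F`-closed then `A` is a `⊗`-ideal. -/
theorem dualityPair_closure_properties :
    (∀ (T U : Type u) [Category.{v} T] [Category.{v} U]
      [HasZeroObject T] [Preadditive T] [HasShift T ℤ]
      [∀ n : ℤ, (shiftFunctor T n).Additive] [Pretriangulated T]
      [HasZeroObject U] [Preadditive U] [HasShift U ℤ]
      [∀ n : ℤ, (shiftFunctor U n).Additive] [Pretriangulated U]
      (D : DualityTriple T U) (A : Set T) (B : Set U), IsDualityPair D A B →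
        (ClosedUnderProducts B → ClosedUnderCoproducts A) ∧
        (IsTriangulatedClass B → IsTriangulatedClass A)) ∧
    (∀ (T : Type u) [Category.{v} T]
      [HasZeroObject T] [Preadditive T] [HasShift T ℤ]
      [∀ n : ℤ, (shiftFunctor T n).Additive] [Pretriangulated T]
      [MonoidalCategory T] [SymmetricCategory T] [MonoidalPreadditive T] [MonoidalClosed T],
      IsBigTT T → ∀ (I : T), IsBrownComenetzDual (𝟙_ T) (𝟙_ T) I →
        ∀ (A B : Set T), IsBCDualityPair I A B →
          (∀ (X : T), ∀ b ∈ B, (ihom X).obj b ∈ B) →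
          ∀ (X : T), ∀ a ∈ A, X ⊗ a ∈ A) := by
  constructor
  · intro T U _ _ _ _ _ _ _ _ _ _ _ _ D A B hP
    obtain ⟨hAB, hfin, hretr⟩ := hP
    constructor
    · intro hBprod α X hX c hc
      obtain ⟨hl⟩ := D.QT_coproductsToProducts X c hc
      exact (hAB _).mpr (hBprod _ (fun a => (hAB _).mp (hX a)) _ ⟨hl⟩)
    · rintro ⟨hBiso, hBs1, hBsn, hBext⟩
      haveI := D.QT_additive
      have hzero : ∀ {Z : U}, IsZero Z → ∀ {b : U}, b ∈ B → Z ∈ B := fun hZ _ hb =>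
        hretr hb ⟨0, 0, hZ.eq_of_src _ _⟩
      refine ⟨?_, ?_, ?_, ?_⟩
      · intro X hX Y hXY
        obtain ⟨e⟩ := hXY
        exact (hAB _).mpr (hBiso ((hAB _).mp hX) ⟨(D.QT.mapIso e.op).symm⟩)
      · intro X hX
        have hX' := (hAB X).mp hX
        obtain ⟨h, mem⟩ := D.QT_exact _
          (rot_of_distTriang _ (contractible_distinguished X))
        have mem' := inv_rot_of_distTriang _ mem
        refine (hAB _).mpr (hBext _ mem' (hBsn _ hX') ?_)
        exact hzero (D.QT.map_isZero ((isZero_zero T).op)) hX'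
      · intro X hX
        have hX' := (hAB X).mp hX
        obtain ⟨h, mem⟩ := D.QT_exact _
          (rot_of_distTriang _ (contractible_distinguished (X⟦(-1:ℤ)⟧)))
        have mem' := rot_of_distTriang _ mem
        refine (hAB _).mpr (hBext _ mem' ?_ ?_)
        · exact hzero (D.QT.map_isZero ((isZero_zero T).op)) hX'
        · refine hBs1 _ (hBiso hX' ?_)
          exact ⟨(D.QT.mapIso ((shiftFunctorCompIsoId T (-1:ℤ) (1:ℤ)
            (by ring)).app X).op)⟩
      · intro Tr hTr h1 h3
        obtain ⟨h, mem⟩ := D.QT_exact _ hTr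
        exact (hAB _).mpr (hBext _ mem ((hAB _).mp h3) ((hAB _).mp h1))
  · intro T _ _ _ _ _ _ _ _ _ _ hbig I hI A B hP hF X a ha
    obtain ⟨hAB, hfin, hretr⟩ := hP
    have hBiso : ∀ {b b' : T}, b ∈ B → (b ≅ b') → b' ∈ B := fun hb e =>
      hretr hb ⟨e.inv, e.hom, e.inv_hom_id⟩
    exact (hAB _).mpr (hBiso (hF X _ ((hAB a).mp ha)) ((ihomTensorIso X a).app I).symm)

end Paper
end

section
/- Let (T, U, Q, D) be an AGJ duality triple. If D is a definable subcategory of T, then (D, D^d) is a symmetric, product-closed duality pair on the duality triple (T, U, Q). -/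
/-! Membership in `DefinedBy Φ` and in its dual are surjectivity, resp. injectivity, conditions
on the maps `Hom(fᵢ, -)` and `Hom(Dfᵢ, -)`. Since `ℚ/ℤ` is an injective cogenerator, a group
homomorphism is surjective iff its character dual is injective, and conversely. The natural
isomorphisms `Hom(C, X)⁺ ≅ Hom(DC, QX)` identify the character dual of `Hom(fᵢ, X)` with
`Hom(Dfᵢ, QX)`, and `D² ≅ 𝟭` identifies `Hom(D²fᵢ, QY)` with `Hom(fᵢ, QY)`. The closure
properties are formal: surjectivity of `Hom(f, -)` passes to retracts and products, injectivity
to retracts and all limits, and binary coproducts are products in a preadditive category. -/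

open CategoryTheory CategoryTheory.Limits CategoryTheory.Pretriangulated Opposite

universe v u

namespace Paper

section Definable

variable {T : Type u} [Category.{v} T]

/-- The full subcategory `T^c ⊆ T` of compact objects. -/
abbrev CompactObjects (T : Type u) [Category.{v} T] :=
  ObjectProperty.FullSubcategory (fun C : T => IsCompactObj T C)

/-- A set of morphisms between compact objects of `T`. -/
structure CompactMorphismFamily (T : Type u) [Category.{v} T] where
  ι : Type v
  src : ι → CompactObjects T
  tgt : ι → CompactObjects T
  f : ∀ i, src i ⟶ tgt i

/-- The subcategory defined by a set `Φ = {fᵢ : Aᵢ ⟶ Bᵢ}` of morphisms between compact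
objects: `{X ∈ T : Hom_T(fᵢ, X) is surjective for all i}`. -/
def DefinedBy (Φ : CompactMorphismFamily T) : Set T :=
  {X : T | ∀ i, Function.Surjective fun g : (Φ.tgt i).obj ⟶ X =>
    (ObjectProperty.ι _).map (Φ.f i) ≫ g}

/-- A class `D ⊆ T` is *definable* if it is defined by some set of morphisms between
compact objects. -/
def IsDefinable (D : Set T) : Prop :=
  ∃ Φ : CompactMorphismFamily T, D = DefinedBy Φ

end Definable

end Paper

namespace Paper

section Hom

variable {C : Type u} [Category.{v} C] [Preadditive C]

/-- Postcomposition with a morphism, as a homomorphism of Hom-groups. -/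
def postcompHom {X X' : C} (W : C) (h : X ⟶ X') : (W ⟶ X) →+ (W ⟶ X') :=
  AddMonoidHom.mk' (fun g => g ≫ h) fun a b => by simp [Preadditive.add_comp]

/-- Precomposition with a morphism, as a homomorphism of Hom-groups. -/
def precompHom {W W' : C} (X : C) (g : W' ⟶ W) : (W ⟶ X) →+ (W' ⟶ X) :=
  AddMonoidHom.mk' (fun f => g ≫ f) fun a b => by simp [Preadditive.comp_add]

end Hom

section AGJ

variable (T U : Type u) [Category.{v} T] [Category.{v} U]
  [HasZeroObject T] [Preadditive T] [HasShift T ℤ]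
  [∀ n : ℤ, (shiftFunctor T n).Additive] [Pretriangulated T]
  [HasZeroObject U] [Preadditive U] [HasShift U ℤ]
  [∀ n : ℤ, (shiftFunctor U n).Additive] [Pretriangulated U]

/-- An *Auslander-Gruson-Jensen duality triple* `(T, U, Q, D)` is a duality triple
`(T, U, Q)` together with functors `D : (T^c)ᵒᵖ ⥤ U^c` and `D : (U^c)ᵒᵖ ⥤ T^c` forming an
(adjoint) equivalence of categories, such that there are isomorphisms
`Hom_T(C, X)⁺ ≅ Hom_U(DC, QX)` and `Hom_U(C', Y)⁺ ≅ Hom_T(DC', QY)`, natural in both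
variables, where `(-)⁺ = Hom_ℤ(-, ℚ/ℤ)` is the character dual. -/
structure AGJDualityTriple extends DualityTriple T U where
  DT : (CompactObjects T)ᵒᵖ ⥤ CompactObjects U
  DU : (CompactObjects U)ᵒᵖ ⥤ CompactObjects T
  equivT : Nonempty (DT.rightOp ⋙ DU ≅ 𝟭 (CompactObjects T))
  equivU : Nonempty (DU.rightOp ⋙ DT ≅ 𝟭 (CompactObjects U))
  eT : ∀ (C : CompactObjects T) (X : T),
    ((C.obj ⟶ X) →+ QmodZ) ≃+ ((DT.obj (op C)).obj ⟶ toDualityTriple.QT.obj (op X))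
  eT_natX : ∀ (C : CompactObjects T) ⦃X X' : T⦄ (h : X ⟶ X')
      (φ : (C.obj ⟶ X') →+ QmodZ),
    eT C X (φ.comp (postcompHom C.obj h)) = eT C X' φ ≫ toDualityTriple.QT.map h.op
  eT_natC : ∀ ⦃C C' : CompactObjects T⦄ (g : C' ⟶ C) (X : T)
      (φ : (C'.obj ⟶ X) →+ QmodZ),
    eT C X (φ.comp (precompHom X
        ((ObjectProperty.ι (fun Z : T => IsCompactObj T Z)).map g))) =
      (ObjectProperty.ι (fun Z : U => IsCompactObj U Z)).map (DT.map g.op) ≫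
        eT C' X φ
  eU : ∀ (C' : CompactObjects U) (Y : U),
    ((C'.obj ⟶ Y) →+ QmodZ) ≃+ ((DU.obj (op C')).obj ⟶ toDualityTriple.QU.obj (op Y))
  eU_natX : ∀ (C' : CompactObjects U) ⦃Y Y' : U⦄ (h : Y ⟶ Y')
      (φ : (C'.obj ⟶ Y') →+ QmodZ),
    eU C' Y (φ.comp (postcompHom C'.obj h)) = eU C' Y' φ ≫ toDualityTriple.QU.map h.op
  eU_natC : ∀ ⦃C' C'' : CompactObjects U⦄ (g : C'' ⟶ C') (Y : U)
      (φ : (C''.obj ⟶ Y) →+ QmodZ),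
    eU C' Y (φ.comp (precompHom Y
        ((ObjectProperty.ι (fun Z : U => IsCompactObj U Z)).map g))) =
      (ObjectProperty.ι (fun Z : T => IsCompactObj T Z)).map (DU.map g.op) ≫
        eU C'' Y φ

variable {T U}

/-- The *dual definable subcategory* of `U` associated with a set `Φ` of morphisms between
compact objects of `T` (defining the definable subcategory `DefinedBy Φ` of `T`):
`{Y ∈ U : Ker Hom_U(Dfᵢ, Y) = 0 for all i}`. -/
def DualDefinedByT (A : AGJDualityTriple T U) (Φ : CompactMorphismFamily T) : Set U :=
  {Y : U | ∀ i, Function.Injective fun g : (A.DT.obj (op (Φ.src i))).obj ⟶ Y =>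
    (ObjectProperty.ι (fun Z : U => IsCompactObj U Z)).map (A.DT.map (Φ.f i).op) ≫ g}

/-- The dual definable subcategory of `T` associated with a set of morphisms between
compact objects of `U`. -/
def DualDefinedByU (A : AGJDualityTriple T U) (Ψ : CompactMorphismFamily U) : Set T :=
  {X : T | ∀ i, Function.Injective fun g : (A.DU.obj (op (Ψ.src i))).obj ⟶ X =>
    (ObjectProperty.ι (fun Z : T => IsCompactObj T Z)).map (A.DU.map (Ψ.f i).op) ≫ g}

end AGJ

end Paper

namespace Paper

open Function

section Precomposition

variable {C : Type*} [Category C] {A B : C} (h : A ⟶ B)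

lemma surjective_precomp_of_retract {X Y : C} (s : Y ⟶ X) (r : X ⟶ Y) (hsr : s ≫ r = 𝟙 Y)
    (hX : Surjective fun g : B ⟶ X => h ≫ g) : Surjective fun g : B ⟶ Y => h ≫ g := by
  intro k
  obtain ⟨g, hg⟩ := hX (k ≫ s)
  refine ⟨g ≫ r, ?_⟩
  simp only at hg ⊢
  rw [← Category.assoc, hg, Category.assoc, hsr, Category.comp_id]

lemma injective_precomp_of_retract {X Y : C} (s : Y ⟶ X) (r : X ⟶ Y) (hsr : s ≫ r = 𝟙 Y)
    (hX : Injective fun g : B ⟶ X => h ≫ g) : Injective fun g : B ⟶ Y => h ≫ g := by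
  intro g₁ g₂ hg
  have hs : g₁ ≫ s = g₂ ≫ s := hX (by simp only at hg ⊢; rw [reassoc_of% hg])
  simpa [hsr] using hs =≫ r

lemma surjective_precomp_of_isLimit {J : Type*} {F : Discrete J ⥤ C} {c : Cone F}
    (hc : IsLimit c) (hF : ∀ j, Surjective fun g : B ⟶ F.obj j => h ≫ g) :
    Surjective fun g : B ⟶ c.pt => h ≫ g := by
  intro k
  choose g hg using fun j => hF j (k ≫ c.π.app j)
  refine ⟨hc.lift ⟨B, Discrete.natTrans fun j => g j⟩, hc.hom_ext fun j => ?_⟩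
  simpa using hg j

lemma injective_precomp_of_isLimit {J : Type*} [Category J] {F : J ⥤ C} {c : Cone F}
    (hc : IsLimit c) (hF : ∀ j, Injective fun g : B ⟶ F.obj j => h ≫ g) :
    Injective fun g : B ⟶ c.pt => h ≫ g :=
  fun g₁ g₂ hg => hc.hom_ext fun j => hF j (by simp only at hg ⊢; rw [reassoc_of% hg])

end Precomposition

lemma injective_iff_of_comp_eq {α β γ δ : Type*} (e₁ : α ≃ γ) (e₂ : β ≃ δ) {u : α → β}
    {v : γ → δ} (h : v ∘ e₁ = e₂ ∘ u) : Injective u ↔ Injective v := by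
  rw [← EquivLike.injective_comp e₁ v, h, EquivLike.comp_injective]

lemma surjective_iff_of_comp_eq {α β γ δ : Type*} (e₁ : α ≃ γ) (e₂ : β ≃ δ) {u : α → β}
    {v : γ → δ} (h : v ∘ e₁ = e₂ ∘ u) : Surjective u ↔ Surjective v := by
  rw [← EquivLike.surjective_comp e₁ v, h, EquivLike.comp_surjective]

lemma surjective_precomp_iff_of_arrow_iso {C : Type*} [Category C] {f f' : Arrow C}
    (e : f ≅ f') (X : C) :
    (Surjective fun g : f.right ⟶ X => f.hom ≫ g) ↔
      Surjective fun g : f'.right ⟶ X => f'.hom ≫ g :=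
  surjective_iff_of_comp_eq ((Comma.rightIso e).homCongr (Iso.refl X))
    ((Comma.leftIso e).homCongr (Iso.refl X)) <| funext fun g => by
      simp only [comp_apply, Iso.homCongr_apply, Iso.refl_hom, Category.comp_id]
      exact (Arrow.w_assoc e.inv g).symm

lemma surjective_dual_comp_iff {G H : Type*} [AddCommGroup G] [AddCommGroup H] (f : G →+ H) :
    Surjective (fun φ : H →+ QmodZ => φ.comp f) ↔ Injective f :=
  CharacterModule.dual_surjective_iff_injective (f := f.toIntLinearMap)

lemma injective_dual_comp_iff {G H : Type*} [AddCommGroup G] [AddCommGroup H] (f : G →+ H) :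
    Injective (fun φ : H →+ QmodZ => φ.comp f) ↔ Surjective f :=
  CharacterModule.dual_injective_iff_surjective (f := f.toIntLinearMap)

section Closure

variable {T : Type u} [Category.{v} T] (Φ : CompactMorphismFamily T)

lemma closedUnderRetracts_definedBy : ClosedUnderRetracts (DefinedBy Φ) :=
  fun _ hX _ ⟨s, r, hsr⟩ i => surjective_precomp_of_retract _ s r hsr (hX i)

lemma closedUnderProducts_definedBy : ClosedUnderProducts (DefinedBy Φ) :=
  fun _ _ hX _ ⟨hc⟩ i => surjective_precomp_of_isLimit _ hc fun ⟨a⟩ => hX a i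

lemma closedUnderFiniteCoproducts_definedBy [Preadditive T] :
    ClosedUnderFiniteCoproducts (DefinedBy Φ) := fun _ _ hX hY _ ⟨hc⟩ i =>
  surjective_precomp_of_isLimit _ (binaryBiconeIsBilimitOfColimitCoconeOfIsColimit hc).isLimit
    (by rintro ⟨_ | _⟩; exacts [hX i, hY i])

end Closure

namespace AGJDualityTriple

variable {T U : Type u} [Category.{v} T] [Category.{v} U]
  [HasZeroObject T] [Preadditive T] [HasShift T ℤ]
  [∀ n : ℤ, (shiftFunctor T n).Additive] [Pretriangulated T]
  [HasZeroObject U] [Preadditive U] [HasShift U ℤ]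
  [∀ n : ℤ, (shiftFunctor U n).Additive] [Pretriangulated U]
  (A : AGJDualityTriple T U)

lemma closedUnderRetracts_dualDefinedByT (Φ : CompactMorphismFamily T) :
    ClosedUnderRetracts (DualDefinedByT A Φ) :=
  fun _ hX _ ⟨s, r, hsr⟩ i => injective_precomp_of_retract _ s r hsr (hX i)

lemma closedUnderFiniteCoproducts_dualDefinedByT (Φ : CompactMorphismFamily T) :
    ClosedUnderFiniteCoproducts (DualDefinedByT A Φ) := fun _ _ hX hY _ ⟨hc⟩ i =>
  injective_precomp_of_isLimit _ (binaryBiconeIsBilimitOfColimitCoconeOfIsColimit hc).isLimit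
    (by rintro ⟨_ | _⟩; exacts [hX i, hY i])

lemma surjective_precomp_iff_injective_precomp_DT {C C' : CompactObjects T} (f : C' ⟶ C)
    (X : T) :
    (Surjective fun g : C.obj ⟶ X => (ObjectProperty.ι _).map f ≫ g) ↔
      Injective fun g : (A.DT.obj (op C')).obj ⟶ A.QT.obj (op X) =>
        (ObjectProperty.ι _).map (A.DT.map f.op) ≫ g :=
  (injective_dual_comp_iff (precompHom X ((ObjectProperty.ι _).map f))).symm.trans <|
    injective_iff_of_comp_eq (A.eT C' X).toEquiv (A.eT C X).toEquiv <|
      funext fun φ => (A.eT_natC f X φ).symm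

lemma injective_precomp_iff_surjective_precomp_DU {C C' : CompactObjects U} (f : C' ⟶ C)
    (Y : U) :
    (Injective fun g : C.obj ⟶ Y => (ObjectProperty.ι _).map f ≫ g) ↔
      Surjective fun g : (A.DU.obj (op C')).obj ⟶ A.QU.obj (op Y) =>
        (ObjectProperty.ι _).map (A.DU.map f.op) ≫ g :=
  (surjective_dual_comp_iff (precompHom Y ((ObjectProperty.ι _).map f))).symm.trans <|
    surjective_iff_of_comp_eq (A.eU C' Y).toEquiv (A.eU C Y).toEquiv <|
      funext fun φ => (A.eU_natC f Y φ).symm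

lemma mem_definedBy_iff_QT_mem_dualDefinedByT (Φ : CompactMorphismFamily T) (X : T) :
    X ∈ DefinedBy Φ ↔ A.QT.obj (op X) ∈ DualDefinedByT A Φ :=
  forall_congr' fun i => A.surjective_precomp_iff_injective_precomp_DT (Φ.f i) X

lemma mem_dualDefinedByT_iff_QU_mem_definedBy (Φ : CompactMorphismFamily T) (Y : U) :
    Y ∈ DualDefinedByT A Φ ↔ A.QU.obj (op Y) ∈ DefinedBy Φ := by
  obtain ⟨η⟩ := A.equivT
  refine forall_congr' fun i => (A.injective_precomp_iff_surjective_precomp_DU _ Y).trans ?_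
  exact surjective_precomp_iff_of_arrow_iso
    (Arrow.isoOfNatIso (Functor.isoWhiskerRight η (ObjectProperty.ι _)) (Arrow.mk (Φ.f i))) _

end AGJDualityTriple

/-- Let `(T, U, Q, D)` be an AGJ duality triple. If `D` is a definable
subcategory of `T` (defined by a set `Φ` of morphisms between compact objects), then
`(D, D^d)` is a symmetric, product-closed duality pair on the duality triple `(T, U, Q)`,
where `D^d` is the dual definable subcategory determined by `Φ` via AGJ duality. -/
theorem definable_gives_symmetric_duality_pair
    {T U : Type u} [Category.{v} T] [Category.{v} U]
    [HasZeroObject T] [Preadditive T] [HasShift T ℤ]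
    [∀ n : ℤ, (shiftFunctor T n).Additive] [Pretriangulated T]
    [HasZeroObject U] [Preadditive U] [HasShift U ℤ]
    [∀ n : ℤ, (shiftFunctor U n).Additive] [Pretriangulated U]
    (A : AGJDualityTriple T U) (Φ : CompactMorphismFamily T) :
    IsDualityPairFor A.toDualityTriple.QT (DefinedBy Φ) (DualDefinedByT A Φ) ∧
    IsDualityPairFor A.toDualityTriple.QU (DualDefinedByT A Φ) (DefinedBy Φ) ∧
    ClosedUnderProducts (DefinedBy Φ) :=
  ⟨⟨A.mem_definedBy_iff_QT_mem_dualDefinedByT Φ, A.closedUnderFiniteCoproducts_dualDefinedByT Φ,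
      A.closedUnderRetracts_dualDefinedByT Φ⟩,
    ⟨A.mem_dualDefinedByT_iff_QU_mem_definedBy Φ, closedUnderFiniteCoproducts_definedBy Φ,
      closedUnderRetracts_definedBy Φ⟩,
    closedUnderProducts_definedBy Φ⟩

end Paper
end
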